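/- Let H be a real Hilbert space, T : H → H nonexpansive, (β_n), (λ_n) ⊂ (0,1], x₀ ∈ H, and let (x_n) be generated by the (T-KM) iteration. Let N ∈ ℕ∖{0} satisfy N ≥ max{‖x₀ − p‖, ‖p‖} for some p ∈ Fix T, let ℓ ∈ ℕ∖{0} and let b, D, B, L : ℕ → ℕ be monotone functions satisfying (Q2)–(Q6). Then for every k ∈ ℕ and every monotone f : ℕ → ℕ there exist n ≤ ψ(k,f) and x ∈ B_{2N} such that ‖T(x) − x‖ ≤ 1/(f(n)+1) and ⟪x, x − x_m⟫ ≤ 1/(k+1) for all m ≥ n; here ψ(k,f) := ν₂(48N(ǧ^{(R)}(0)+1)²), where g(m) := f(ν₂(m)), R := 64N⁴(k+1)², ǧ(m) := max{g(48N(m+1)²), 48N(m+1)²}, ǧ^{(R)} is the R-fold composition of ǧ, ν₂(k) := max{b(4Nℓ(k+1)−1), ν₁(2ℓ(k+1)−1)}, ν₁(k) := D(G(3k+2) + ⌈ln(6N(k+1))⌉) + 1 and G(k) := max{B(4N(k+1)−1), L(10N(k+1)−1)}. -/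

import Mathlib

/-!
The iteration stays in the ball `B_N(p)`, and a recursive inequality for `‖x_{n+1} - x_n‖`
together with `(Q2)`–`(Q6)` turns into the rate `ν₂` of asymptotic regularity
`‖T x_n - x_n‖ → 0`. Convex combinations of approximate fixed points in a ball are again
approximate fixed points, so the whole convex hull `C_n` of a late tail `(x_m)_{m ≥ n}` consists
of them. The squared distances from `0` to the shrinking hulls `C_n` increase and stay below
`4N²`, so along the indices produced by iterating `ǧ` they almost stop increasing within
`64N⁴(k+1)²` steps. A point of almost minimal norm in such a hull then satisfies the
variational inequality `⟪y, y - x_m⟫ ≤ 1/(k+1)` of the projection of `0` onto it: a finitary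
form of `limsup ⟪x̃, x̃ - x_n⟫ ≤ 0` that needs no weak compactness.
-/

/-- `G(k) := max{B(4N(k+1)−1), L(10N(k+1)−1)}`. -/
def Gfun (N : ℕ) (B L : ℕ → ℕ) (k : ℕ) : ℕ :=
  max (B (4 * N * (k + 1) - 1)) (L (10 * N * (k + 1) - 1))

/-- `ν₁(k) := D(G(3k+2) + ⌈ln(6N(k+1))⌉) + 1`. -/
noncomputable def nu1 (N : ℕ) (D B L : ℕ → ℕ) (k : ℕ) : ℕ :=
  D (Gfun N B L (3 * k + 2) + Nat.ceil (Real.log (6 * (N : ℝ) * (k + 1)))) + 1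

/-- `ν₂(k) := max{b(4Nℓ(k+1)−1), ν₁(2ℓ(k+1)−1)}`. -/
noncomputable def nu2 (N l : ℕ) (b D B L : ℕ → ℕ) (k : ℕ) : ℕ :=
  max (b (4 * N * l * (k + 1) - 1)) (nu1 N D B L (2 * l * (k + 1) - 1))

/-- `ǧ(m) := max{f(ν₂(48N(m+1)²)), 48N(m+1)²}` (i.e. `ǧ` for `g(m) := f(ν₂(m))`). -/
noncomputable def gcheckKM (N l : ℕ) (b D B L : ℕ → ℕ) (f : ℕ → ℕ) (m : ℕ) : ℕ :=
  max (f (nu2 N l b D B L (48 * N * (m + 1) ^ 2))) (48 * N * (m + 1) ^ 2)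

/-- `ψ(k,f) := ν₂(48N(ǧ^{(R)}(0)+1)²)` with `R := 64N⁴(k+1)²`. -/
noncomputable def psiKM (N l : ℕ) (b D B L : ℕ → ℕ) (k : ℕ) (f : ℕ → ℕ) : ℕ :=
  nu2 N l b D B L
    (48 * N * ((gcheckKM N l b D B L f)^[64 * N ^ 4 * (k + 1) ^ 2] 0 + 1) ^ 2)

open Finset Metric Real

theorem norm_sub_le_of_mem_closedBall {E : Type*} [SeminormedAddCommGroup E] {v w p : E} {r : ℝ}
    (hv : v ∈ closedBall p r) (hw : w ∈ closedBall p r) : ‖v - w‖ ≤ 2 * r := by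
  rw [← dist_eq_norm]
  linarith [dist_triangle_right v w p, mem_closedBall.1 hv, mem_closedBall.1 hw]

theorem exists_lt_succ_le_add_of_le {d : ℕ → ℝ} {R : ℕ} {M q : ℝ} (h₀ : 0 ≤ d 0)
    (hR : d R ≤ M) (hM : M < R * q) : ∃ i < R, d (i + 1) ≤ d i + q := by
  by_contra! h
  have hgrowth : ∀ i ≤ R, i * q ≤ d i := by
    intro i
    induction i with
    | zero => simpa using h₀
    | succ i ih =>
      intro hi
      push_cast
      linarith [ih (by omega), h i (by omega)]
  linarith [hgrowth R le_rfl]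

theorem le_prod_mul_add_sum_of_le_mul_add {a c e : ℕ → ℝ} (hc₀ : ∀ n, 0 ≤ c n)
    (hc₁ : ∀ n, c n ≤ 1) (he : ∀ n, 0 ≤ e n) (h : ∀ n, a (n + 1) ≤ c (n + 1) * a n + e (n + 1))
    {s n : ℕ} (hsn : s ≤ n) : a n ≤ (∏ i ∈ Ioc s n, c i) * a s + ∑ i ∈ Ioc s n, e i := by
  induction n, hsn using Nat.le_induction with
  | base => simp
  | succ n hsn ih =>
    rw [prod_Ioc_succ_top hsn, sum_Ioc_succ_top hsn]
    have hsum : 0 ≤ ∑ i ∈ Ioc s n, e i := sum_nonneg fun i _ => he i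
    nlinarith [h n, mul_le_mul_of_nonneg_left ih (hc₀ (n + 1)),
      mul_le_of_le_one_left hsum (hc₁ (n + 1))]

theorem prod_le_exp_neg_sum_one_sub {ι : Type*} (s : Finset ι) {f : ι → ℝ}
    (hf : ∀ i ∈ s, 0 ≤ f i) : ∏ i ∈ s, f i ≤ exp (-∑ i ∈ s, (1 - f i)) := by
  rw [← sum_neg_distrib, exp_sum]
  exact prod_le_prod hf fun i _ => by linarith [add_one_le_exp (-(1 - f i))]

theorem sum_Ioc_le_one_div_of_forall_sum_Icc_le {F : ℕ → ℝ} (hF : ∀ i, 0 ≤ F i) {W : ℕ → ℕ}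
    (hW : ∀ k m : ℕ, ∑ i ∈ Icc (W k + 1) (W k + m), F i ≤ 1 / (k + 1)) {K s n : ℕ} (hK : 0 < K)
    (hWs : W (K - 1) ≤ s) : ∑ i ∈ Ioc s n, F i ≤ 1 / K := by
  rcases le_total s n with hsn | hns
  · have h := hW (K - 1) (n - W (K - 1))
    rw [Nat.add_sub_cancel' (hWs.trans hsn), Icc_add_one_left_eq_Ioc, Nat.cast_pred hK,
      sub_add_cancel] at h
    exact (sum_le_sum_of_subset_of_nonneg (Ioc_subset_Ioc_left hWs) fun i _ _ => hF i).trans h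
  · rw [Ioc_eq_empty_of_le hns, sum_empty]
    positivity

theorem le_sum_Ioc_of_le_sum_Icc {f : ℕ → ℝ} (hf₀ : ∀ i, 0 ≤ f i) (hf₁ : ∀ i, f i ≤ 1)
    {s c m n : ℕ} (h : ((s + c : ℕ) : ℝ) ≤ ∑ i ∈ Icc 1 m, f i) (hmn : m ≤ n) :
    s ≤ n ∧ (c : ℝ) ≤ ∑ i ∈ Ioc s n, f i := by
  have hsum_le : ∀ a, ∑ i ∈ Ioc 0 a, f i ≤ a := fun a => by
    simpa using sum_le_card_nsmul (Ioc 0 a) f 1 fun i _ => hf₁ i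
  rw [show Icc 1 m = Ioc 0 m from Icc_add_one_left_eq_Ioc 0 m] at h
  push_cast at h
  have hsn : s ≤ n := by
    have : (s : ℝ) ≤ m := by linarith [hsum_le m, (c.cast_nonneg : (0 : ℝ) ≤ c)]
    exact_mod_cast this.trans (Nat.cast_le.2 hmn)
  refine ⟨hsn, ?_⟩
  have hmono : ∑ i ∈ Ioc 0 m, f i ≤ ∑ i ∈ Ioc 0 n, f i :=
    sum_le_sum_of_subset_of_nonneg (Ioc_subset_Ioc_right hmn) fun i _ _ => hf₀ i
  linarith [sum_Ioc_consecutive f (Nat.zero_le s) hsn, hsum_le s]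

theorem le_one_div_add_one_of_sq_le {t : ℝ} {N A : ℕ} (hN : 0 < N)
    (h : t ^ 2 ≤ 4 * N * (2 / ((48 * N * (A + 1) ^ 2 : ℕ) + 1)) +
      (2 / ((48 * N * (A + 1) ^ 2 : ℕ) + 1)) ^ 2) :
    t ≤ 1 / (A + 1) := by
  have hN₁ : (1 : ℝ) ≤ N := by exact_mod_cast hN
  push_cast at h
  set u : ℝ := (A + 1) ^ 2
  have hu : 1 ≤ u := one_le_pow₀ (by simp)
  have hNu : u ≤ N * u := le_mul_of_one_le_left (by linarith) hN₁
  -- after clearing the denominator `w = 48Nu + 1`, the goal is `0 ≤ w * P` for this `P`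
  have hP : 0 ≤ 1920 * (N * u) ^ 2 + 88 * (N * u) + 1 - 4 * u := by nlinarith
  refine le_of_pow_le_pow_left₀ two_ne_zero (by positivity) (h.trans ?_)
  rw [one_div_pow, div_pow, mul_div_assoc', div_add_div _ _ (by positivity) (by positivity),
    div_le_div_iff₀ (by positivity) (by positivity)]
  nlinarith [mul_nonneg (by positivity : (0 : ℝ) ≤ 48 * N * u + 1) hP]

section HilbertSpace

variable {H : Type*} [NormedAddCommGroup H] [InnerProductSpace ℝ H]

theorem convex_setOf_sq_norm_sub_sub_sq_norm_sub_le (a b : H) (c : ℝ) :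
    Convex ℝ {z : H | ‖a - z‖ ^ 2 - ‖b - z‖ ^ 2 ≤ c} := by
  have h : {z : H | ‖a - z‖ ^ 2 - ‖b - z‖ ^ 2 ≤ c} =
      {z | innerₛₗ ℝ ((2 : ℝ) • (b - a)) z ≤ c - ‖a‖ ^ 2 + ‖b‖ ^ 2} := by
    ext z
    simp only [Set.mem_ofPred_eq, innerₛₗ_apply_apply, norm_sub_sq_real, real_inner_smul_left,
      inner_sub_left]
    constructor <;> intro h <;> linarith
  rw [h]
  exact convex_halfSpace_le (innerₛₗ ℝ _).isLinear _

/-- For `z ∈ S`, `‖T w - z‖² - ‖w - z‖² ≤ 4Rε + ε²`. This condition is affine in `z`, so it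
holds on the convex hull, in particular for `z = w`. -/
theorem sq_norm_sub_le_of_mem_convexHull {T : H → H} (hT : ∀ a b, ‖T a - T b‖ ≤ ‖a - b‖)
    {S : Set H} {p : H} {R ε : ℝ} (hS : ∀ z ∈ S, ‖T z - z‖ ≤ ε) (hSR : S ⊆ closedBall p R)
    {w : H} (hw : w ∈ convexHull ℝ S) : ‖T w - w‖ ^ 2 ≤ 4 * R * ε + ε ^ 2 := by
  have hwR : w ∈ closedBall p R := convexHull_min hSR (convex_closedBall p R) hw
  have hS' : S ⊆ {z | ‖T w - z‖ ^ 2 - ‖w - z‖ ^ 2 ≤ 4 * R * ε + ε ^ 2} := by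
    intro z hz
    have hε : 0 ≤ ε := (norm_nonneg _).trans (hS z hz)
    have hwz := norm_sub_le_of_mem_closedBall hwR (hSR hz)
    have hTwz : ‖T w - z‖ ≤ ‖w - z‖ + ε :=
      (norm_sub_le_norm_sub_add_norm_sub _ (T z) _).trans (add_le_add (hT w z) (hS z hz))
    show ‖T w - z‖ ^ 2 - ‖w - z‖ ^ 2 ≤ 4 * R * ε + ε ^ 2
    nlinarith [norm_nonneg (T w - z), norm_nonneg (w - z)]
  simpa using convexHull_min hS' (convex_setOf_sq_norm_sub_sub_sq_norm_sub_le _ _ _) hw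

theorem two_mul_inner_sub_le_of_sq_norm_le_add {C : Set H} (hC : Convex ℝ C) {y z : H}
    (hy : y ∈ C) (hz : z ∈ C) {δ t : ℝ} (hmin : ∀ w ∈ C, ‖y‖ ^ 2 ≤ ‖w‖ ^ 2 + δ)
    (ht₀ : 0 ≤ t) (ht₁ : t ≤ 1) :
    2 * t * inner ℝ y (y - z) ≤ δ + t ^ 2 * ‖y - z‖ ^ 2 := by
  have h := hmin _ (hC.add_smul_sub_mem hy hz ⟨ht₀, ht₁⟩)
  rw [norm_add_sq_real, inner_smul_right, norm_smul, mul_pow, Real.norm_eq_abs, sq_abs,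
    norm_sub_rev, ← neg_sub y z, inner_neg_right] at h
  linarith

theorem inner_sub_le_one_div_of_sq_norm_le_add {C : Set H} (hC : Convex ℝ C) {p : H} {N : ℕ}
    (hN : 0 < N) (hCN : C ⊆ closedBall p N) {y z : H} (hy : y ∈ C) (hz : z ∈ C) {k : ℕ}
    (hmin : ∀ w ∈ C, ‖y‖ ^ 2 ≤ ‖w‖ ^ 2 + 1 / (4 * N ^ 2 * (k + 1) ^ 2)) :
    inner ℝ y (y - z) ≤ 1 / (k + 1) := by
  have hN₁ : (1 : ℝ) ≤ N := by exact_mod_cast hN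
  set t : ℝ := 1 / (4 * N ^ 2 * (k + 1))
  have ht : 0 < t := by positivity
  have hvar := two_mul_inner_sub_le_of_sq_norm_le_add hC hy hz hmin ht.le
    (by rw [div_le_one (by positivity)]; nlinarith [(k.cast_nonneg : (0 : ℝ) ≤ k)])
  have hbound : 1 / (4 * N ^ 2 * (k + 1) ^ 2) + t ^ 2 * ‖y - z‖ ^ 2 ≤ 2 * t * (1 / (k + 1)) :=
    calc 1 / (4 * N ^ 2 * (k + 1) ^ 2) + t ^ 2 * ‖y - z‖ ^ 2
        ≤ 1 / (4 * N ^ 2 * (k + 1) ^ 2) + t ^ 2 * (2 * N) ^ 2 := by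
          gcongr
          exact norm_sub_le_of_mem_closedBall (hCN hy) (hCN hz)
      _ = 2 * t * (1 / (k + 1)) := by simp only [t]; field_simp; ring
  exact le_of_mul_le_mul_left (hvar.trans hbound) (by positivity)

/-- The tail hulls shrink, so the squared distances from `0` to them increase and stay below
`4N²`; hence among the first `64N⁴(k+1)²` of them two consecutive ones are close, and a point
of almost minimal norm in the later hull is almost minimal in the earlier one. -/
theorem exists_inner_sub_le_of_mem_closedBall {x : ℕ → H} {p : H} {N : ℕ} (hN : 0 < N)
    (hx : ∀ m, x m ∈ closedBall p N) (hp : ‖p‖ ≤ N) {n : ℕ → ℕ} (hn : Monotone n) (k : ℕ) :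
    ∃ i < 64 * N ^ 4 * (k + 1) ^ 2, ∃ y ∈ convexHull ℝ (x '' Set.Ici (n (i + 1))),
      ∀ m, n i ≤ m → inner ℝ y (y - x m) ≤ 1 / (k + 1) := by
  set C : ℕ → Set H := fun i => convexHull ℝ (x '' Set.Ici (n i))
  set d : ℕ → ℝ := fun i => sInf ((fun w => ‖w‖ ^ 2) '' C i)
  have hxC : ∀ i m, n i ≤ m → x m ∈ C i := fun i m hm => subset_convexHull ℝ _ ⟨m, hm, rfl⟩
  have hC : ∀ i, C i ⊆ closedBall p N := fun i =>
    convexHull_min (by rintro _ ⟨m, -, rfl⟩; exact hx m) (convex_closedBall p N)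
  have hne : ∀ i, ((fun w : H => ‖w‖ ^ 2) '' C i).Nonempty := fun i =>
    ⟨_, x (n i), hxC i _ le_rfl, rfl⟩
  have hd : ∀ i, ∀ w ∈ C i, d i ≤ ‖w‖ ^ 2 := fun i w hw =>
    csInf_le ⟨0, by rintro _ ⟨w, -, rfl⟩; positivity⟩ ⟨w, hw, rfl⟩
  set R := 64 * N ^ 4 * (k + 1) ^ 2
  set δ : ℝ := 1 / (4 * N ^ 2 * (k + 1) ^ 2)
  have hδ : 0 < δ := by positivity
  have hdR : d R ≤ 4 * N ^ 2 := by
    have hxR := norm_le_of_mem_closedBall (hx (n R))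
    nlinarith [hd _ _ (hxC R _ le_rfl), norm_nonneg (x (n R))]
  obtain ⟨i, hi, hdi⟩ := exists_lt_succ_le_add_of_le (q := δ / 2)
    (le_csInf (hne 0) (by rintro _ ⟨w, -, rfl⟩; positivity)) hdR (by
      have hN₁ : (1 : ℝ) ≤ N := by exact_mod_cast hN
      simp only [R, δ]
      push_cast
      field_simp
      nlinarith)
  obtain ⟨_, ⟨y, hy, rfl⟩, hylt⟩ :=
    exists_lt_of_csInf_lt (hne (i + 1)) (lt_add_of_pos_right _ (half_pos hδ))
  have hCi : C (i + 1) ⊆ C i :=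
    convexHull_mono (Set.image_mono (Set.Ici_subset_Ici.2 (hn i.le_succ)))
  exact ⟨i, hi, y, hy, fun m hm => inner_sub_le_one_div_of_sq_norm_le_add (convex_convexHull ℝ _)
    hN (hC i) (hCi hy) (hxC i m hm) fun w hw => by linarith [hd i w hw]⟩

end HilbertSpace

section KrasnoselskiiMann

variable {E : Type*} [NormedAddCommGroup E]

theorem apply_mem_closedBall_of_apply_eq {T : E → E} (hT : ∀ a b, ‖T a - T b‖ ≤ ‖a - b‖)
    {v p : E} {r : ℝ} (hp : T p = p) (hv : v ∈ closedBall p r) : T v ∈ closedBall p r := by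
  rw [mem_closedBall_iff_norm] at hv ⊢
  calc ‖T v - p‖ = ‖T v - T p‖ := by rw [hp]
    _ ≤ r := (hT v p).trans hv

variable [NormedSpace ℝ E]

theorem smul_mem_closedBall_of_norm_le {v p : E} {r b : ℝ} (hv : v ∈ closedBall p r)
    (hp : ‖p‖ ≤ r) (hb : b ∈ Set.Icc (0 : ℝ) 1) : b • v ∈ closedBall p r := by
  have h₀ : (0 : E) ∈ closedBall p r := by rwa [mem_closedBall, dist_eq_norm, zero_sub, norm_neg]
  simpa using convex_closedBall p r h₀ hv (sub_nonneg.2 hb.2) hb.1 (sub_add_cancel 1 b)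

variable {T : E → E} {β lam : ℕ → ℝ} {x : ℕ → E}

theorem tkm_mem_closedBall (hT : ∀ a b, ‖T a - T b‖ ≤ ‖a - b‖)
    (hβ : ∀ n, β n ∈ Set.Icc (0 : ℝ) 1) (hlam : ∀ n, lam n ∈ Set.Icc (0 : ℝ) 1)
    (hx : ∀ n, x (n + 1) = β n • x n + lam n • (T (β n • x n) - β n • x n))
    {p : E} {r : ℝ} (hp : T p = p) (h₀ : x 0 ∈ closedBall p r) (hpr : ‖p‖ ≤ r) (n : ℕ) :
    x n ∈ closedBall p r := by
  induction n with
  | zero => exact h₀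
  | succ n ih =>
    have hu := smul_mem_closedBall_of_norm_le ih hpr (hβ n)
    convert convex_closedBall p r hu (apply_mem_closedBall_of_apply_eq hT hp hu)
      (sub_nonneg.2 (hlam n).2) (hlam n).1 (sub_add_cancel 1 _) using 1
    rw [hx n]
    module

theorem tkm_norm_sub_succ_le (hT : ∀ a b, ‖T a - T b‖ ≤ ‖a - b‖) (hβ : ∀ n, 0 ≤ β n)
    (hlam : ∀ n, lam n ∈ Set.Icc (0 : ℝ) 1)
    (hx : ∀ n, x (n + 1) = β n • x n + lam n • (T (β n • x n) - β n • x n))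
    {M : ℝ} (hxM : ∀ n, ‖x n‖ ≤ M) (hTM : ∀ n, ‖T (β n • x n) - β n • x n‖ ≤ M) (n : ℕ) :
    ‖x (n + 2) - x (n + 1)‖ ≤
      β (n + 1) * ‖x (n + 1) - x n‖ + M * (|β (n + 1) - β n| + |lam (n + 1) - lam n|) := by
  set u := β n • x n
  set u' := β (n + 1) • x (n + 1)
  have hdecomp : x (n + 2) - x (n + 1) = ((1 - lam (n + 1)) • (u' - u) +
      lam (n + 1) • (T u' - T u)) + (lam (n + 1) - lam n) • (T u - u) := by
    rw [show n + 2 = n + 1 + 1 from rfl]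
    linear_combination (norm := module) hx (n + 1) - hx n
  have hcombo : ‖(1 - lam (n + 1)) • (u' - u) + lam (n + 1) • (T u' - T u)‖ ≤ ‖u' - u‖ :=
    mem_closedBall_zero_iff.1 <| convex_closedBall (0 : E) ‖u' - u‖
      (mem_closedBall_zero_iff.2 le_rfl) (mem_closedBall_zero_iff.2 (hT u' u))
      (sub_nonneg.2 (hlam (n + 1)).2) (hlam (n + 1)).1 (sub_add_cancel 1 _)
  have hu : ‖u' - u‖ ≤ β (n + 1) * ‖x (n + 1) - x n‖ + |β (n + 1) - β n| * M := by
    calc ‖u' - u‖ = ‖β (n + 1) • (x (n + 1) - x n) + (β (n + 1) - β n) • x n‖ := by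
          congr 1; module
      _ ≤ _ := (norm_add_le _ _).trans (by
          rw [norm_smul, norm_smul, Real.norm_eq_abs, Real.norm_eq_abs, abs_of_nonneg (hβ _)]
          gcongr
          exact hxM n)
  calc ‖x (n + 2) - x (n + 1)‖
      ≤ ‖(1 - lam (n + 1)) • (u' - u) + lam (n + 1) • (T u' - T u)‖ +
          ‖(lam (n + 1) - lam n) • (T u - u)‖ := hdecomp ▸ norm_add_le _ _
    _ ≤ (β (n + 1) * ‖x (n + 1) - x n‖ + |β (n + 1) - β n| * M) +
          |lam (n + 1) - lam n| * M := by
        rw [norm_smul, Real.norm_eq_abs]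
        gcongr
        · exact hcombo.trans hu
        · exact hTM n
    _ = _ := by ring

end KrasnoselskiiMann

section Rates

variable {N l : ℕ} {b D B L : ℕ → ℕ}

theorem Gfun_mono (hB : Monotone B) (hL : Monotone L) : Monotone (Gfun N B L) := fun _ _ h =>
  max_le_max (hB (Nat.sub_le_sub_right (by gcongr) 1)) (hL (Nat.sub_le_sub_right (by gcongr) 1))

theorem nu1_mono (hD : Monotone D) (hB : Monotone B) (hL : Monotone L) :
    Monotone (nu1 N D B L) := by
  intro i j hij
  have hlog : log (6 * N * (i + 1)) ≤ log (6 * N * (j + 1)) := by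
    rcases N.eq_zero_or_pos with rfl | hN
    · simp
    · exact log_le_log (by positivity) (by gcongr)
  exact Nat.add_le_add_right
    (hD (add_le_add (Gfun_mono hB hL (by omega)) (Nat.ceil_mono hlog))) 1

theorem nu2_mono (hb : Monotone b) (hD : Monotone D) (hB : Monotone B) (hL : Monotone L) :
    Monotone (nu2 N l b D B L) := fun _ _ h =>
  max_le_max (hb (Nat.sub_le_sub_right (by gcongr) 1))
    (nu1_mono hD hB hL (Nat.sub_le_sub_right (by gcongr) 1))

/-- Beyond `s = G(3k+2)` the perturbation terms sum to at most `7/(30(k+1))` by `(Q4)` and `(Q6)`,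
while by `(Q3)` and `t ≤ exp (t - 1)` the product of the `β i` over `(s, n]` is at most
`1/(6N(k+1))` once `n ≥ ν₁(k)`. -/
theorem le_one_div_of_nu1_le {a β lam : ℕ → ℝ} (hN : 0 < N)
    (hβ : ∀ n, β n ∈ Set.Icc (0 : ℝ) 1) (ha : ∀ n, a n ≤ 2 * N)
    (hrec : ∀ n, a (n + 1) ≤
      β (n + 1) * a n + 2 * N * (|β (n + 1) - β n| + |lam (n + 1) - lam n|))
    (hQ3 : ∀ k : ℕ, (k : ℝ) ≤ ∑ i ∈ Icc 1 (D k), (1 - β i))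
    (hQ4 : ∀ k n : ℕ, ∑ i ∈ Icc (B k + 1) (B k + n), |β i - β (i - 1)| ≤ 1 / (k + 1))
    (hQ6 : ∀ k n : ℕ, ∑ i ∈ Icc (L k + 1) (L k + n), |lam i - lam (i - 1)| ≤ 1 / (k + 1))
    {k n : ℕ} (hn : nu1 N D B L k ≤ n) : a n ≤ 1 / (k + 1) := by
  set s := Gfun N B L (3 * k + 2)
  set c := ⌈log (6 * (N : ℝ) * (k + 1))⌉₊
  obtain ⟨hsn, hc⟩ := le_sum_Ioc_of_le_sum_Icc (f := fun i => 1 - β i)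
    (fun i => sub_nonneg.2 (hβ i).2) (fun i => by linarith [(hβ i).1]) (hQ3 (s + c))
    (Nat.le_of_succ_le hn)
  have hprod : ∏ i ∈ Ioc s n, β i ≤ 1 / (6 * N * (k + 1)) :=
    calc ∏ i ∈ Ioc s n, β i ≤ exp (-∑ i ∈ Ioc s n, (1 - β i)) :=
          prod_le_exp_neg_sum_one_sub _ fun i _ => (hβ i).1
      _ ≤ exp (-log (6 * N * (k + 1))) := exp_le_exp.2 (neg_le_neg ((Nat.le_ceil _).trans hc))
      _ = 1 / (6 * N * (k + 1)) := by rw [exp_neg, exp_log (by positivity), one_div]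
  have hβsum := sum_Ioc_le_one_div_of_forall_sum_Icc_le (fun i => abs_nonneg _) hQ4
    (K := 4 * N * (3 * k + 2 + 1)) (by positivity) (s := s) (n := n) (le_max_left _ _)
  have hlamsum := sum_Ioc_le_one_div_of_forall_sum_Icc_le (fun i => abs_nonneg _) hQ6
    (K := 10 * N * (3 * k + 2 + 1)) (by positivity) (s := s) (n := n) (le_max_right _ _)
  push_cast at hβsum hlamsum
  have hgron := le_prod_mul_add_sum_of_le_mul_add (a := a) (c := β)
    (e := fun i => 2 * N * (|β i - β (i - 1)| + |lam i - lam (i - 1)|))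
    (fun n => (hβ n).1) (fun n => (hβ n).2) (fun _ => by positivity) hrec hsn
  rw [← mul_sum, sum_add_distrib] at hgron
  have hprod_a : (∏ i ∈ Ioc s n, β i) * a s ≤ 1 / (6 * N * (k + 1)) * (2 * N) :=
    (mul_le_mul_of_nonneg_left (ha s) (prod_nonneg fun i _ => (hβ i).1)).trans
      (mul_le_mul_of_nonneg_right hprod (by positivity))
  calc a n ≤ 1 / (6 * N * (k + 1)) * (2 * N) +
        2 * N * (1 / (4 * N * (3 * k + 2 + 1)) + 1 / (10 * N * (3 * k + 2 + 1))) := by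
        have := add_le_add hβsum hlamsum
        nlinarith
    _ = 17 / 30 * (1 / (k + 1)) := by field_simp; ring
    _ ≤ 1 / (k + 1) := by
        have : (0 : ℝ) ≤ 1 / (k + 1) := by positivity
        linarith

variable {E : Type*} [NormedAddCommGroup E] [NormedSpace ℝ E] {T : E → E} {β lam : ℕ → ℝ}
  {x : ℕ → E}

theorem tkm_norm_apply_sub_le_of_step_rate (hT : ∀ a b, ‖T a - T b‖ ≤ ‖a - b‖)
    (hβ : ∀ n, β n ∈ Set.Icc (0 : ℝ) 1)
    (hx : ∀ n, x (n + 1) = β n • x n + lam n • (T (β n • x n) - β n • x n))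
    (hN : 0 < N) (hl : 0 < l) (hxN : ∀ n, ‖x n‖ ≤ 2 * N)
    (hQ2 : ∀ k n : ℕ, b k ≤ n → |1 - β n| ≤ 1 / (k + 1)) (hQ5 : ∀ n : ℕ, 1 / (l : ℝ) ≤ lam n)
    (hrate : ∀ k n, nu1 N D B L k ≤ n → ‖x (n + 1) - x n‖ ≤ 1 / (k + 1))
    {k n : ℕ} (hn : nu2 N l b D B L k ≤ n) : ‖T (x n) - x n‖ ≤ 2 / (k + 1) := by
  set u := β n • x n
  have hβn : 1 - β n ≤ 1 / (4 * N * l * (k + 1)) := by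
    have h := hQ2 _ n ((le_max_left _ _).trans hn)
    rw [Nat.cast_pred (by positivity), sub_add_cancel] at h
    push_cast at h
    exact (le_abs_self _).trans h
  have hstep : ‖x (n + 1) - x n‖ ≤ 1 / (2 * l * (k + 1)) := by
    have h := hrate _ n ((le_max_right _ _).trans hn)
    rw [Nat.cast_pred (by positivity), sub_add_cancel] at h
    push_cast at h
    exact h
  have hxu : ‖x n - u‖ ≤ 1 / (2 * l * (k + 1)) :=
    calc ‖x n - u‖ = (1 - β n) * ‖x n‖ := by
          rw [show x n - u = (1 - β n) • x n by module, norm_smul, Real.norm_eq_abs,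
            abs_of_nonneg (sub_nonneg.2 (hβ n).2)]
      _ ≤ 1 / (4 * N * l * (k + 1)) * (2 * N) :=
          mul_le_mul hβn (hxN n) (norm_nonneg _) (by positivity)
      _ = 1 / (2 * l * (k + 1)) := by field_simp; ring
  have hTu : ‖T u - u‖ ≤ 1 / (k + 1) := by
    have hlam : lam n * ‖T u - u‖ = ‖x (n + 1) - u‖ := by
      rw [hx n, add_sub_cancel_left, norm_smul, Real.norm_eq_abs,
        abs_of_pos ((by positivity : (0 : ℝ) < 1 / l).trans_le (hQ5 n))]
    have h : 1 / (l : ℝ) * ‖T u - u‖ ≤ 1 / l * (1 / (k + 1)) :=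
      calc 1 / (l : ℝ) * ‖T u - u‖ ≤ ‖x (n + 1) - u‖ :=
            hlam ▸ mul_le_mul_of_nonneg_right (hQ5 n) (norm_nonneg _)
        _ ≤ ‖x (n + 1) - x n‖ + ‖x n - u‖ := norm_sub_le_norm_sub_add_norm_sub _ _ _
        _ ≤ 1 / (2 * l * (k + 1)) + 1 / (2 * l * (k + 1)) := add_le_add hstep hxu
        _ = 1 / l * (1 / (k + 1)) := by field_simp; ring
    exact le_of_mul_le_mul_left h (by positivity)
  have hl₁ : (1 : ℝ) ≤ l := by exact_mod_cast hl
  calc ‖T (x n) - x n‖ ≤ ‖T (x n) - T u‖ + ‖T u - u‖ + ‖u - x n‖ :=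
        (norm_sub_le_norm_sub_add_norm_sub _ u _).trans
          (add_le_add (norm_sub_le_norm_sub_add_norm_sub _ _ _) le_rfl)
    _ ≤ 1 / (2 * l * (k + 1)) + 1 / (k + 1) + 1 / (2 * l * (k + 1)) := by
        rw [norm_sub_rev u]
        gcongr
        exact (hT _ _).trans hxu
    _ = 1 / (l * (k + 1)) + 1 / (k + 1) := by field_simp; ring
    _ ≤ 1 / (k + 1) + 1 / (k + 1) := by
        gcongr
        exact le_mul_of_one_le_left (by positivity) hl₁
    _ = 2 / (k + 1) := by ring

theorem tkm_norm_apply_sub_le_of_nu2_le (hT : ∀ a b, ‖T a - T b‖ ≤ ‖a - b‖)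
    (hβ : ∀ n, β n ∈ Set.Icc (0 : ℝ) 1) (hlam : ∀ n, lam n ∈ Set.Icc (0 : ℝ) 1)
    (hx : ∀ n, x (n + 1) = β n • x n + lam n • (T (β n • x n) - β n • x n))
    (hN : 0 < N) {p : E} (hp : T p = p) (hball : ∀ n, x n ∈ closedBall p N) (hpN : ‖p‖ ≤ N)
    (hl : 0 < l) (hQ2 : ∀ k n : ℕ, b k ≤ n → |1 - β n| ≤ 1 / (k + 1))
    (hQ5 : ∀ n : ℕ, 1 / (l : ℝ) ≤ lam n)
    (hQ3 : ∀ k : ℕ, (k : ℝ) ≤ ∑ i ∈ Icc 1 (D k), (1 - β i))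
    (hQ4 : ∀ k n : ℕ, ∑ i ∈ Icc (B k + 1) (B k + n), |β i - β (i - 1)| ≤ 1 / (k + 1))
    (hQ6 : ∀ k n : ℕ, ∑ i ∈ Icc (L k + 1) (L k + n), |lam i - lam (i - 1)| ≤ 1 / (k + 1))
    {k n : ℕ} (hn : nu2 N l b D B L k ≤ n) : ‖T (x n) - x n‖ ≤ 2 / (k + 1) := by
  have hxN : ∀ n, ‖x n‖ ≤ 2 * N := fun n => by linarith [norm_le_of_mem_closedBall (hball n)]
  have hu : ∀ n, β n • x n ∈ closedBall p N := fun n =>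
    smul_mem_closedBall_of_norm_le (hball n) hpN (hβ n)
  refine tkm_norm_apply_sub_le_of_step_rate hT hβ hx hN hl hxN hQ2 hQ5 (fun k n => ?_) hn
  exact le_one_div_of_nu1_le (a := fun n => ‖x (n + 1) - x n‖) hN hβ
    (fun n => norm_sub_le_of_mem_closedBall (hball _) (hball _))
    (tkm_norm_sub_succ_le hT (fun n => (hβ n).1) hlam hx hxN fun n =>
      norm_sub_le_of_mem_closedBall (apply_mem_closedBall_of_apply_eq hT hp (hu n)) (hu n))
    hQ3 hQ4 hQ6

end Rates

theorem le_gcheckKM {N : ℕ} (hN : 0 < N) (l : ℕ) (b D B L f : ℕ → ℕ) (m : ℕ) :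
    m ≤ gcheckKM N l b D B L f m :=
  le_max_of_le_right (by nlinarith)

theorem tkm_quantitative_limsup_general
    {H : Type*} [NormedAddCommGroup H] [InnerProductSpace ℝ H]
    (T : H → H) (hT : ∀ a b : H, ‖T a - T b‖ ≤ ‖a - b‖)
    (β lam : ℕ → ℝ)
    (hβ : ∀ n, β n ∈ Set.Ioc (0 : ℝ) 1)
    (hlam : ∀ n, lam n ∈ Set.Ioc (0 : ℝ) 1)
    (x : ℕ → H)
    (hx : ∀ n, x (n + 1) = β n • x n + lam n • (T (β n • x n) - β n • x n))
    (N : ℕ) (hN : 0 < N)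
    (p : H) (hp : T p = p)
    (hNp : max ‖x 0 - p‖ ‖p‖ ≤ (N : ℝ))
    (l : ℕ) (hl : 0 < l)
    (b D B L : ℕ → ℕ)
    (hbmono : Monotone b) (hDmono : Monotone D) (hBmono : Monotone B) (hLmono : Monotone L)
    (hQ2 : ∀ k n : ℕ, b k ≤ n → |1 - β n| ≤ 1 / (k + 1))
    (hQ5 : ∀ n : ℕ, 1 / (l : ℝ) ≤ lam n)
    (hQ3 : ∀ k : ℕ, (k : ℝ) ≤ ∑ i ∈ Finset.Icc 1 (D k), (1 - β i))
    (hQ4 : ∀ k n : ℕ, ∑ i ∈ Finset.Icc (B k + 1) (B k + n), |β i - β (i - 1)| ≤ 1 / (k + 1))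
    (hQ6 : ∀ k n : ℕ, ∑ i ∈ Finset.Icc (L k + 1) (L k + n), |lam i - lam (i - 1)| ≤ 1 / (k + 1)) :
    ∀ k : ℕ, ∀ f : ℕ → ℕ, Monotone f →
      ∃ n ≤ psiKM N l b D B L k f, ∃ y : H, ‖y - p‖ ≤ 2 * N ∧
        ‖T y - y‖ ≤ 1 / (f n + 1) ∧
        ∀ m : ℕ, n ≤ m → (inner ℝ y (y - x m) : ℝ) ≤ 1 / (k + 1) := by
  intro k f _
  have hβ' : ∀ n, β n ∈ Set.Icc (0 : ℝ) 1 := fun n => Set.Ioc_subset_Icc_self (hβ n)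
  have hlam' : ∀ n, lam n ∈ Set.Icc (0 : ℝ) 1 := fun n => Set.Ioc_subset_Icc_self (hlam n)
  have hpN : ‖p‖ ≤ N := (le_max_right _ _).trans hNp
  have hball : ∀ n, x n ∈ closedBall p N := tkm_mem_closedBall hT hβ' hlam' hx hp
    (mem_closedBall_iff_norm.2 ((le_max_left _ _).trans hNp)) hpN
  set a : ℕ → ℕ := fun i => (gcheckKM N l b D B L f)^[i] 0
  set n : ℕ → ℕ := fun i => nu2 N l b D B L (48 * N * (a i + 1) ^ 2)
  have ha : Monotone a := monotone_nat_of_le_succ fun i => by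
    simpa only [a, Function.iterate_succ_apply'] using le_gcheckKM hN l b D B L f (a i)
  have hn : Monotone n := (nu2_mono hbmono hDmono hBmono hLmono).comp fun i j h => by
    have := ha h
    gcongr
  obtain ⟨i, hi, y, hy, hvar⟩ := exists_inner_sub_le_of_mem_closedBall hN hball hpN hn k
  have hS : x '' Set.Ici (n (i + 1)) ⊆ closedBall p N := by rintro _ ⟨m, -, rfl⟩; exact hball m
  refine ⟨n i, hn hi.le, y, ?_, ?_, hvar⟩
  · linarith [mem_closedBall_iff_norm.1 (convexHull_min hS (convex_closedBall _ _) hy)]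
  have hTy := le_one_div_add_one_of_sq_le hN <|
    sq_norm_sub_le_of_mem_convexHull hT (by
      rintro _ ⟨m, hm, rfl⟩
      exact tkm_norm_apply_sub_le_of_nu2_le hT hβ' hlam' hx hN hp hball hpN hl hQ2 hQ5 hQ3 hQ4
        hQ6 hm) hS hy
  have hfa : f (n i) ≤ a (i + 1) := by
    simp only [a, Function.iterate_succ_apply']
    exact le_max_left _ _
  exact hTy.trans
    (one_div_le_one_div_of_le (by positivity) (by exact_mod_cast Nat.succ_le_succ hfa))

/-- quantitative version of `limsup ⟨x̃, x̃ − x_n⟩ ≤ 0`,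
avoiding sequential weak compactness. -/
theorem tkm_quantitative_limsup
    {H : Type*} [NormedAddCommGroup H] [InnerProductSpace ℝ H] [CompleteSpace H]
    (T : H → H) (hT : ∀ a b : H, ‖T a - T b‖ ≤ ‖a - b‖)
    (β lam : ℕ → ℝ)
    (hβ : ∀ n, β n ∈ Set.Ioc (0 : ℝ) 1)
    (hlam : ∀ n, lam n ∈ Set.Ioc (0 : ℝ) 1)
    (x : ℕ → H)
    (hx : ∀ n, x (n + 1) = β n • x n + lam n • (T (β n • x n) - β n • x n))
    (N : ℕ) (hN : 0 < N)
    (p : H) (hp : T p = p)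
    (hNp : max ‖x 0 - p‖ ‖p‖ ≤ (N : ℝ))
    (l : ℕ) (hl : 0 < l)
    (b D B L : ℕ → ℕ)
    (hbmono : Monotone b) (hDmono : Monotone D) (hBmono : Monotone B) (hLmono : Monotone L)
    (hQ2 : ∀ k n : ℕ, b k ≤ n → |1 - β n| ≤ 1 / (k + 1))
    (hQ5 : ∀ n : ℕ, 1 / (l : ℝ) ≤ lam n)
    (hQ3 : ∀ k : ℕ, (k : ℝ) ≤ ∑ i ∈ Finset.Icc 1 (D k), (1 - β i))
    (hQ4 : ∀ k n : ℕ, ∑ i ∈ Finset.Icc (B k + 1) (B k + n), |β i - β (i - 1)| ≤ 1 / (k + 1))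
    (hQ6 : ∀ k n : ℕ, ∑ i ∈ Finset.Icc (L k + 1) (L k + n), |lam i - lam (i - 1)| ≤ 1 / (k + 1)) :
    ∀ k : ℕ, ∀ f : ℕ → ℕ, Monotone f →
      ∃ n ≤ psiKM N l b D B L k f, ∃ y : H, ‖y - p‖ ≤ 2 * N ∧
        ‖T y - y‖ ≤ 1 / (f n + 1) ∧
        ∀ m : ℕ, n ≤ m → (inner ℝ y (y - x m) : ℝ) ≤ 1 / (k + 1) :=
  tkm_quantitative_limsup_general T hT β lam hβ hlam x hx N hN p hp hNp l hl b D B L hbmono hDmono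
    hBmono hLmono hQ2 hQ5 hQ3 hQ4 hQ6
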